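/- arXiv:1909.13278 — 3 statements merged into one kernel-verified Lean document; each statement's English description precedes it below -/
import Mathlib

section
/- Let $v_1,\dots,v_q$ be elements of a commutative ring, and let $E$ be the $q\times q$ matrix whose $(i,j)$ entry is the elementary symmetric polynomial $e_{i-1}(v_1,\dots,\widehat{v_j},\dots,v_q)$ (omitting $v_j$), with $e_0 = 1$. Then $\det(E) = \prod_{1 \le i < j \le q} (v_i - v_j)$. -/
open Finset Polynomial

/-- The `k`-th elementary symmetric polynomial of the family `v` restricted to
the index set `A`. -/
def esymmOn {R : Type*} [CommRing R] {ι : Type*} [DecidableEq ι]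
    (A : Finset ι) (v : ι → R) (k : ℕ) : R :=
  ∑ s ∈ A.powersetCard k, ∏ i ∈ s, v i

/-- The matrix `Λ(b)` with `b 1, …, b q` in the first column, `-1` just above the
diagonal, and zeros elsewhere. -/
def lambdaMatrix {R : Type*} [CommRing R] (q : ℕ) (b : ℕ → R) :
    Matrix (Fin q) (Fin q) R :=
  Matrix.of fun i j =>
    if (j : ℕ) = 0 then b ((i : ℕ) + 1)
    else if (j : ℕ) = (i : ℕ) + 1 then -1 else 0

/-- The `(r+q) × (r+q)` Sylvester matrix of `A` (regarded as having degree `r`,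
with coefficients written `A = ∑ a_k t^(r-k)`) and `B` (regarded as having
degree `q`): the first `q` columns contain the coefficients `a_0, …, a_r` of `A`
starting on the diagonal, the last `r` columns those of `B`. -/
def sylvester {R : Type*} [CommRing R] (A B : Polynomial R) (r q : ℕ) :
    Matrix (Fin (r + q)) (Fin (r + q)) R :=
  Matrix.of fun i j =>
    if (j : ℕ) < q then
      (if (j : ℕ) ≤ (i : ℕ) ∧ (i : ℕ) ≤ (j : ℕ) + r then A.coeff (r + (j : ℕ) - (i : ℕ)) else 0)
    else
      (if (j : ℕ) - q ≤ (i : ℕ) ∧ (i : ℕ) ≤ ((j : ℕ) - q) + q then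
        B.coeff (q + ((j : ℕ) - q) - (i : ℕ)) else 0)

/-- The resultant of `A` (of degree `r`) and `B` (of degree `q`) with respect to
`t`: the determinant of their Sylvester matrix. -/
def resultant' {R : Type*} [CommRing R] (A B : Polynomial R) (r q : ℕ) : R :=
  (_root_.sylvester A B r q).det


/-! Since `∏ k ≠ j, (1 + v k t) = (1 + v j t)⁻¹ * ∏ k, (1 + v k t)`, we have
`e_i(v without v_j) = ∑ m ≤ i, (-v j) ^ m * e_(i-m)(v)`. Hence the matrix factors as a lower
unitriangular Toeplitz matrix of the `e_k(v)` times the transposed Vandermonde matrix of `-v`,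
whose determinant is `∏ i < j, (-v j - -v i)`. -/

section Esymm

variable {R ι : Type*} [CommRing R] [DecidableEq ι]

@[simp]
lemma esymmOn_zero (A : Finset ι) (v : ι → R) : esymmOn A v 0 = 1 := by
  simp [esymmOn]

lemma esymmOn_insert_succ {a : ι} {s : Finset ι} (ha : a ∉ s) (v : ι → R) (k : ℕ) :
    esymmOn (insert a s) v (k + 1) = esymmOn s v (k + 1) + v a * esymmOn s v k := by
  simp only [esymmOn, ← Finset.esymm_map_val, Finset.insert_val_of_notMem ha, Multiset.map_cons,
    Multiset.esymm, Multiset.powersetCard_cons, Multiset.map_add, Multiset.sum_add,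
    Multiset.map_map, Function.comp_def, Multiset.prod_cons, Multiset.sum_map_mul_left]

lemma esymmOn_eq_sum_esymmOn_insert {a : ι} {s : Finset ι} (ha : a ∉ s) (v : ι → R) (k : ℕ) :
    esymmOn s v k = ∑ m ∈ range (k + 1), (-v a) ^ m * esymmOn (insert a s) v (k - m) := by
  induction k with
  | zero => simp
  | succ k ih =>
    rw [sum_range_succ', pow_zero, one_mul, Nat.sub_zero, esymmOn_insert_succ ha, ih, mul_sum]
    simp only [Nat.add_sub_add_right, pow_succ]
    rw [add_left_comm, ← sum_add_distrib, sum_eq_zero fun m _ => by ring, add_zero]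

lemma esymmOn_erase_eq_sum {a : ι} {A : Finset ι} (ha : a ∈ A) (v : ι → R) (k : ℕ) :
    esymmOn (A.erase a) v k = ∑ m ∈ range (k + 1), (-v a) ^ m * esymmOn A v (k - m) := by
  rw [esymmOn_eq_sum_esymmOn_insert (notMem_erase a A), insert_erase ha]

end Esymm

lemma prod_Ioi_eq_prod_filter_lt {ι M : Type*} [Fintype ι] [LinearOrder ι]
    [LocallyFiniteOrderTop ι] [CommMonoid M] (f : ι → ι → M) :
    ∏ i, ∏ j ∈ Ioi i, f i j = ∏ p ∈ univ.filter (fun p : ι × ι => p.1 < p.2), f p.1 p.2 := by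
  rw [← univ_product_univ, prod_filter, prod_product]
  simp_rw [← prod_filter, filter_lt_eq_Ioi]

section Matrix

open Matrix

variable {R : Type*} [CommRing R] {q : ℕ}

def esymmToeplitz (v : Fin q → R) : Matrix (Fin q) (Fin q) R :=
  of fun i m => if (m : ℕ) ≤ i then esymmOn univ v (i - m) else 0

lemma det_esymmToeplitz (v : Fin q → R) : (esymmToeplitz v).det = 1 := by
  rw [det_of_isLowerTriangular _ fun i m him => ?_]
  · simp [esymmToeplitz]
  · simp [esymmToeplitz, not_le.2 (OrderDual.toDual_lt_toDual.1 him)]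

lemma esymmOn_erase_matrix_eq_mul (v : Fin q → R) :
    (of fun i j : Fin q => esymmOn (univ.erase j) v (i : ℕ))
      = esymmToeplitz v * (vandermonde (-v))ᵀ := by
  ext i j
  have hrange : (range q).filter (· ≤ (i : ℕ)) = range (i + 1) := by
    ext m; simp only [mem_filter, mem_range]; omega
  simp only [of_apply, mul_apply, esymmToeplitz, transpose_apply,
    vandermonde_apply, Pi.neg_apply, ite_mul, zero_mul]
  rw [esymmOn_erase_eq_sum (mem_univ j), Fin.sum_univ_eq_sum_range
    (fun m => if m ≤ (i : ℕ) then esymmOn univ v (i - m) * (-v j) ^ m else 0), ← sum_filter, hrange]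
  simp_rw [mul_comm]

end Matrix

theorem det_esymm_matrix {R : Type*} [CommRing R] (q : ℕ) (v : Fin q → R) :
    (Matrix.of fun i j : Fin q => esymmOn (Finset.univ.erase j) v (i : ℕ)).det
      = ∏ p ∈ Finset.univ.filter (fun p : Fin q × Fin q => p.1 < p.2), (v p.1 - v p.2) := by
  rw [esymmOn_erase_matrix_eq_mul, Matrix.det_mul, det_esymmToeplitz, one_mul,
    Matrix.det_transpose, Matrix.det_vandermonde, prod_Ioi_eq_prod_filter_lt]
  simp_rw [Pi.neg_apply, neg_sub_neg]
end

section
/- Let $A(t) = \sum_{k=0}^{r} a_k t^{r-k}$ and $B(t) = \sum_{\ell=0}^{q} b_\ell t^{q-\ell}$ be polynomials over a commutative ring with $b_0 = 1$ (i.e., $B$ monic of degree $q$). Let $\Lambda(b)$ be the $q\times q$ matrix with first column entries $b_1,\dots,b_q$, entries $-1$ directly above the diagonal, and zeros elsewhere. Then $\mathrm{res}(A, B) = \det\left(\sum_{k=0}^{r}(-1)^k a_k\, \Lambda(b)^{r-k}\right)$. -/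
open Finset Polynomial

/-!
Write `q = deg B`. Subtracting from each column `A * X^j` (`j < q`) of the Sylvester matrix of
`B` and `A` the combination `B * (A * X^j /ₘ B)` of its `B`-columns replaces it by `A * X^j %ₘ B`.
The result is block triangular, with the matrix of multiplication by `A` on `R[X]/(B)` and a
unitriangular matrix on the diagonal, so `Res(B, A)` is the norm of `A` in `R[X]/(B)`. In the basis
`X^(q-1), …, X, 1` multiplication by `-X` has matrix `Λ(b)`, so `∑ (-1)^k a_k Λ(b)^(r-k)` is the
matrix of multiplication by `(-1)^r A`; its sign `(-1)^(rq)` is the one relating `Res(A, B)` to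
`Res(B, A)`.
-/

namespace Polynomial

variable {R : Type*} [CommRing R]

noncomputable def descPoly (r : ℕ) (a : ℕ → R) : R[X] :=
  ∑ k ∈ range (r + 1), C (a k) * X ^ (r - k)

theorem coeff_descPoly (r : ℕ) (a : ℕ → R) (n : ℕ) :
    (descPoly r a).coeff n = if n ≤ r then a (r - n) else 0 := by
  simp only [descPoly, finsetSum_coeff, coeff_C_mul_X_pow]
  split_ifs with hn
  · rw [Finset.sum_eq_single (r - n) (fun k hk hne => if_neg (by grind)) (by grind)]
    grind
  · exact Finset.sum_eq_zero fun k hk => if_neg (by grind)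

theorem natDegree_descPoly_le (r : ℕ) (a : ℕ → R) : (descPoly r a).natDegree ≤ r :=
  natDegree_le_iff_coeff_eq_zero.2 fun n hn => by
    rw [coeff_descPoly, if_neg (by exact_mod_cast hn.not_ge)]

theorem monic_descPoly {r : ℕ} {a : ℕ → R} (ha : a 0 = 1) : (descPoly r a).Monic :=
  monic_of_natDegree_le_of_coeff_eq_one r (natDegree_descPoly_le r a) <| by
    simp [coeff_descPoly, ha]

theorem natDegree_descPoly [Nontrivial R] {r : ℕ} {a : ℕ → R} (ha : a 0 = 1) :
    (descPoly r a).natDegree = r :=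
  (natDegree_descPoly_le r a).antisymm <| le_natDegree_of_ne_zero <| by simp [coeff_descPoly, ha]

theorem resultant'_eq_resultant (A B : R[X]) (r q : ℕ) :
    resultant' A B r q = A.resultant B r q := by
  have : _root_.sylvester A B r q =
      (Polynomial.sylvester A B r q).submatrix Fin.revPerm Fin.revPerm := by
    ext i j
    have := i.isLt; have := j.isLt
    simp only [_root_.sylvester, Polynomial.sylvester, Matrix.submatrix_apply, Matrix.of_apply,
      Fin.addCases, Set.mem_Icc, Fin.revPerm_apply, Fin.val_rev]
    split_ifs <;> simp_all <;> first | omega | (congr 1; omega)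
  rw [resultant', this, Matrix.det_submatrix_equiv_self, resultant]

section CoeffMatrix

variable {ι κ κ' : Type*}

def coeffMatrix (row : ι → ℕ) (P : κ → R[X]) : Matrix ι κ R :=
  Matrix.of fun i j => (P j).coeff (row i)

theorem coeffMatrix_mul [Fintype κ] (row : ι → ℕ) (P : κ → R[X]) (K : Matrix κ κ' R) :
    coeffMatrix row P * K = coeffMatrix row fun y => ∑ z, P z * C (K z y) := by
  ext i y
  simp [coeffMatrix, Matrix.mul_apply, finsetSum_coeff]

end CoeffMatrix

theorem sylvester_submatrix_finSumFinEquiv {f g : R[X]} {m n : ℕ} (hf : f.natDegree ≤ m)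
    (hg : g.natDegree ≤ n) :
    (Polynomial.sylvester f g m n).submatrix finSumFinEquiv finSumFinEquiv =
      coeffMatrix (fun i => finSumFinEquiv i)
        (Sum.elim (fun j : Fin m => g * X ^ (j : ℕ)) fun j : Fin n => f * X ^ (j : ℕ)) := by
  ext i (j | j) <;>
  · simp only [Polynomial.sylvester, coeffMatrix, Matrix.submatrix_apply, Matrix.of_apply,
      finSumFinEquiv_apply_left, finSumFinEquiv_apply_right, Fin.addCases_left, Fin.addCases_right,
      Sum.elim_inl, Sum.elim_inr, coeff_mul_X_pow', Set.mem_Icc]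
    split_ifs <;> first | rfl | omega | exact (coeff_eq_zero_of_natDegree_lt (by omega)).symm

theorem degree_divByMonic_lt_of_natDegree_lt {p B : R[X]} (hB : B.Monic) {r : ℕ}
    (hp : p.natDegree < r + B.natDegree) : (p /ₘ B).degree < r := by
  nontriviality R
  by_cases h : p /ₘ B = 0
  · simp [h]
  have hBp : B.natDegree ≤ p.natDegree :=
    natDegree_le_natDegree (not_lt.1 (mt (divByMonic_eq_zero_iff hB).2 h))
  rw [degree_eq_natDegree h, natDegree_divByMonic p hB]
  exact_mod_cast (by omega : p.natDegree - B.natDegree < r)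

theorem sum_fin_C_coeff_mul_X_pow {p : R[X]} {n : ℕ} (hp : p.degree < n) :
    ∑ i : Fin n, C (p.coeff i) * X ^ (i : ℕ) = p :=
  (sum_fin (fun i c => C c * X ^ i) (by simp) hp).trans p.sum_C_mul_X_pow_eq

section Reduction

variable {A B : R[X]} {r : ℕ}

noncomputable def divByMonicColumnOp (A B : R[X]) (r : ℕ) :
    Matrix (Fin B.natDegree ⊕ Fin r) (Fin B.natDegree ⊕ Fin r) R :=
  Matrix.fromBlocks 1 0
    (-coeffMatrix (fun i : Fin r => i) fun j : Fin B.natDegree => A * X ^ (j : ℕ) /ₘ B) 1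

theorem det_divByMonicColumnOp : (divByMonicColumnOp A B r).det = 1 := by
  rw [divByMonicColumnOp, Matrix.det_fromBlocks_zero₁₂, Matrix.det_one, Matrix.det_one, mul_one]

theorem coeffMatrix_mul_divByMonicColumnOp (hB : B.Monic) (hA : A.natDegree ≤ r) {ι : Type*}
    (row : ι → ℕ) :
    coeffMatrix row (Sum.elim (fun j : Fin B.natDegree => A * X ^ (j : ℕ))
        fun j : Fin r => B * X ^ (j : ℕ)) * divByMonicColumnOp A B r =
    coeffMatrix row (Sum.elim (fun j : Fin B.natDegree => A * X ^ (j : ℕ) %ₘ B)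
        fun j : Fin r => B * X ^ (j : ℕ)) := by
  rw [divByMonicColumnOp, coeffMatrix_mul]
  congr 1
  funext y
  rcases y with j | j
  · have hdeg : (A * X ^ (j : ℕ) /ₘ B).degree < r :=
      degree_divByMonic_lt_of_natDegree_lt hB <|
        (natDegree_mul_le.trans (add_le_add hA (natDegree_X_pow_le _))).trans_lt
          (by have := j.isLt; omega)
    simp only [Fintype.sum_sum_type, Matrix.fromBlocks_apply₁₁, Matrix.fromBlocks_apply₂₁,
      Matrix.one_apply, Matrix.neg_apply, coeffMatrix, Matrix.of_apply, Sum.elim_inl, Sum.elim_inr]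
    simp only [apply_ite C, map_one, map_zero, mul_ite, mul_one, mul_zero, Finset.sum_ite_eq',
      Finset.mem_univ, if_true, map_neg, mul_neg, Finset.sum_neg_distrib, mul_assoc,
      ← Finset.mul_sum, X_pow_mul, sum_fin_C_coeff_mul_X_pow hdeg]
    exact (modByMonic_eq_sub_mul_div _ _).symm
  · simp [Fintype.sum_sum_type, Matrix.one_apply]

theorem det_coeffMatrix_modByMonic (hB : B.Monic) :
    (coeffMatrix (fun i => finSumFinEquiv i)
      (Sum.elim (fun j : Fin B.natDegree => A * X ^ (j : ℕ) %ₘ B)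
        fun j : Fin r => B * X ^ (j : ℕ))).det = Algebra.norm R (AdjoinRoot.mk B A) := by
  nontriviality R
  have hU : (coeffMatrix (fun i : Fin r => B.natDegree + i) fun j : Fin r => B * X ^ (j : ℕ)).det =
      1 := by
    rw [Matrix.det_of_isUpperTriangular]
    · simp [coeffMatrix, coeff_mul_X_pow', hB.coeff_natDegree]
    · intro i j hji
      simp only [coeffMatrix, Matrix.of_apply, coeff_mul_X_pow']
      split_ifs
      · exact coeff_eq_zero_of_natDegree_lt (by simp at hji; omega)
      · rfl
  set β := AdjoinRoot.powerBasisAux' hB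
  have hβ : ∀ j, β j = AdjoinRoot.root B ^ (j : ℕ) := (AdjoinRoot.powerBasis' hB).basis_eq_pow
  rw [Algebra.norm_eq_matrix_det β, ← mul_one (Algebra.leftMulMatrix β (AdjoinRoot.mk B A)).det,
    ← hU]
  refine Eq.trans ?_ (Matrix.det_fromBlocks_zero₂₁ _
    (coeffMatrix (fun i : Fin B.natDegree => i) fun j : Fin r => B * X ^ (j : ℕ)) _)
  congr 1
  ext (i | i) (j | j)
  · rw [Matrix.fromBlocks_apply₁₁, Algebra.leftMulMatrix_eq_repr_mul,
      AdjoinRoot.powerBasisAux'_repr_apply_to_fun, hβ,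
      ← AdjoinRoot.mk_X, ← map_pow, ← map_mul, AdjoinRoot.modByMonicHom_mk]
    rfl
  · rfl
  · exact coeff_eq_zero_of_degree_lt <| (degree_modByMonic_lt _ hB).trans_le <|
      degree_le_natDegree.trans <| by exact_mod_cast Nat.le_add_right _ _
  · rfl

theorem resultant_eq_norm_mk (hB : B.Monic) (hA : A.natDegree ≤ r) :
    B.resultant A B.natDegree r = Algebra.norm R (AdjoinRoot.mk B A) := by
  rw [resultant, ← Matrix.det_submatrix_equiv_self finSumFinEquiv,
    sylvester_submatrix_finSumFinEquiv le_rfl hA, ← mul_one (Matrix.det _),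
    ← det_divByMonicColumnOp (A := A) (B := B), ← Matrix.det_mul,
    coeffMatrix_mul_divByMonicColumnOp hB hA, det_coeffMatrix_modByMonic hB]

end Reduction

section DescPowerBasis

variable {B : R[X]} (hB : B.Monic) {q : ℕ} (hq : B.natDegree = q)

noncomputable def descPowerBasis : Module.Basis (Fin q) R (AdjoinRoot B) :=
  (AdjoinRoot.powerBasisAux' hB).reindex ((finCongr hq).trans Fin.revPerm)

theorem descPowerBasis_apply (i : Fin q) :
    descPowerBasis hB hq i = AdjoinRoot.root B ^ (q - (i + 1)) := by
  rw [descPowerBasis, Module.Basis.reindex_apply]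
  refine ((AdjoinRoot.powerBasis' hB).basis_eq_pow _).trans ?_
  simp

theorem descPowerBasis_repr_mk [Nontrivial R] {p : R[X]} (hp : p.degree < q) (i : Fin q) :
    (descPowerBasis hB hq).repr (AdjoinRoot.mk B p) i = p.coeff (q - (i + 1)) := by
  rw [descPowerBasis, Module.Basis.repr_reindex_apply,
    AdjoinRoot.powerBasisAux'_repr_apply_to_fun, AdjoinRoot.modByMonicHom_mk,
    (modByMonic_eq_self_iff hB).2]
  · simp
  · rwa [degree_eq_natDegree hB.ne_zero, hq]

end DescPowerBasis

theorem degree_descPoly_sub_X_pow_lt {q : ℕ} {b : ℕ → R} (hb : b 0 = 1) :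
    (descPoly q b - X ^ q).degree < (q : WithBot ℕ) := by
  refine (degree_lt_iff_coeff_zero _ _).2 fun m hm => ?_
  rw [coeff_sub, coeff_descPoly, coeff_X_pow]
  rcases hm.eq_or_lt with rfl | hlt
  · simp [hb]
  · rw [if_neg hlt.not_ge, if_neg hlt.ne', sub_zero]

theorem leftMulMatrix_neg_root_eq_lambdaMatrix [Nontrivial R] {q : ℕ} {b : ℕ → R}
    (hb : b 0 = 1) :
    Algebra.leftMulMatrix (descPowerBasis (monic_descPoly hb) (natDegree_descPoly hb))
      (-AdjoinRoot.root (descPoly q b)) = lambdaMatrix q b := by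
  ext i j
  have := i.isLt
  have := j.isLt
  rw [Algebra.leftMulMatrix_eq_repr_mul, descPowerBasis_apply, lambdaMatrix, Matrix.of_apply,
    neg_mul, ← pow_succ', ← AdjoinRoot.mk_X, ← map_pow, ← map_neg]
  split_ifs with hj0 hij
  · have hmk : AdjoinRoot.mk (descPoly q b) (-X ^ (q - (j + 1) + 1)) =
        AdjoinRoot.mk (descPoly q b) (descPoly q b - X ^ q) :=
      AdjoinRoot.mk_eq_mk.2 ⟨-1, by rw [show q - (j + 1) + 1 = q by omega]; ring⟩
    rw [hmk, descPowerBasis_repr_mk _ _ (degree_descPoly_sub_X_pow_lt hb), coeff_sub,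
      coeff_descPoly, coeff_X_pow, if_pos (by omega), if_neg (by omega), sub_zero]
    congr 1
    omega
  all_goals
    rw [descPowerBasis_repr_mk, coeff_neg, coeff_X_pow]
    · split_ifs <;> first | rfl | omega | exact neg_zero
    · rw [degree_neg, degree_X_pow]
      exact_mod_cast (by omega : q - (j + 1) + 1 < q)

theorem sum_smul_neg_pow_eq_smul_aeval {S : Type*} [CommRing S] [Algebra R S] (r : ℕ)
    (a : ℕ → R) (x : S) : ∑ k ∈ range (r + 1), ((-1 : R) ^ k * a k) • (-x) ^ (r - k) =
      (-1 : R) ^ r • aeval x (descPoly r a) := by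
  simp only [descPoly, map_sum, Finset.smul_sum, map_mul, aeval_C, map_pow, aeval_X]
  refine Finset.sum_congr rfl fun k hk => ?_
  have hsign : (-1 : S) ^ r = (-1) ^ k * (-1) ^ (r - k) := by
    rw [← pow_add, Nat.add_sub_cancel' (by simpa [Nat.lt_succ_iff] using hk)]
  simp only [Algebra.smul_def, map_mul, map_pow, map_neg, map_one, neg_pow x, hsign]
  ring

end Polynomial

theorem resultant_monic_det_formula {R : Type*} [CommRing R] (r q : ℕ)
    (a b : ℕ → R) (hb : b 0 = 1) :
    resultant' (∑ k ∈ Finset.range (r + 1), C (a k) * X ^ (r - k))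
        (∑ k ∈ Finset.range (q + 1), C (b k) * X ^ (q - k)) r q
      = (∑ k ∈ Finset.range (r + 1),
          ((-1 : R) ^ k * a k) • (lambdaMatrix q b) ^ (r - k)).det := by
  nontriviality R
  have hB := monic_descPoly (r := q) hb
  have hq := natDegree_descPoly (r := q) hb
  have hsum : ∑ k ∈ range (r + 1), ((-1 : R) ^ k * a k) • lambdaMatrix q b ^ (r - k) =
      (-1 : R) ^ r • Algebra.leftMulMatrix (descPowerBasis hB hq)
        (AdjoinRoot.mk (descPoly q b) (descPoly r a)) := by
    simp_rw [← leftMulMatrix_neg_root_eq_lambdaMatrix hb, ← map_pow, ← map_smul, ← map_sum,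
      sum_smul_neg_pow_eq_smul_aeval, AdjoinRoot.aeval_eq]
  have hres := resultant_eq_norm_mk hB (natDegree_descPoly_le r a)
  rw [hq] at hres
  change resultant' (descPoly r a) (descPoly q b) r q = _
  rw [hsum, Matrix.det_smul, ← Algebra.norm_eq_matrix_det, Fintype.card_fin,
    resultant'_eq_resultant, resultant_comm, hres, pow_mul]
end

section
/- Let $\alpha_1,\dots,\alpha_r$ be elements of a commutative $\mathbb{Q}$-algebra and $s$ another element. Define $\bar{d}_k = \sum_{i=0}^{k} \binom{r-i}{k-i} e_i(\alpha_1,\dots,\alpha_r)(s/2)^{k-i}$ for $0 \le k \le r$, and $\bar{d}_k = 0$ for $k < 0$ or $k > r$. Then $\prod_{1\le i<j\le r}(s + \alpha_i + \alpha_j) = \det\big([\bar{d}_{2i-j}]_{i,j=1}^{r-1}\big)$. -/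
/-
Put `E(x) = ∏ (1 + x_i X)`, whose coefficients are the `e_k(x)`. Expanding each factor of
`E(α + s/2)` as `(1 + (s/2) X) + α_i X` shows that `d̄_k` is its `k`-th coefficient, so it is
enough to prove `det [e_{2i-j}(x)] = ∏_{i<j} (x_i + x_j)`. This is a polynomial identity; in the
generic case we induct on the number of variables. Regarding both sides as polynomials in the last
variable `t`, they have degree at most `n - 1`, the same leading coefficient by induction, and both
vanish at `t = -x_l` for each `l`: there `E` factors as `Q(X) (1 - x_l² X²)` with
`deg Q < n - 1`, and the rows of the matrix, weighted by powers of `x_l²`, sum to zero.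
-/

open Finset Polynomial

/-- The coefficient `d̄ₖ = dₖ(s/2) = ∑ᵢ C(r-i, k-i) eᵢ(α) (s/2)^(k-i)`, defined for
integer indices `k` with value `0` outside `0 ≤ k ≤ r`. -/
def dbar {R : Type*} [CommRing R] [Algebra ℚ R] (r : ℕ) (s : R) (α : Fin r → R)
    (k : ℤ) : R :=
  if 0 ≤ k ∧ k ≤ (r : ℤ) then
    ∑ i ∈ Finset.range (k.toNat + 1),
      ((r - i).choose (k.toNat - i) : R) * esymmOn Finset.univ α i *
        (((1 : ℚ) / 2) • s) ^ (k.toNat - i)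
  else 0

section

variable {R S : Type*} [CommRing R] [CommRing S] {ι : Type*} [DecidableEq ι]

def intCoeff (p : R[X]) (k : ℤ) : R := if k < 0 then 0 else p.coeff k.toNat

lemma intCoeff_of_neg (p : R[X]) {k : ℤ} (hk : k < 0) : intCoeff p k = 0 := if_pos hk

lemma intCoeff_natCast (p : R[X]) (k : ℕ) : intCoeff p k = p.coeff k := by
  simp [intCoeff]

lemma intCoeff_of_natDegree_lt {p : R[X]} {k : ℤ} (hk : (p.natDegree : ℤ) < k) :
    intCoeff p k = 0 := by
  rw [intCoeff, if_neg (by omega)]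
  exact coeff_eq_zero_of_natDegree_lt (by omega)

lemma intCoeff_map (φ : R →+* S) (p : R[X]) (k : ℤ) :
    intCoeff (p.map φ) k = φ (intCoeff p k) := by
  unfold intCoeff
  split_ifs <;> simp

lemma intCoeff_mul_one_add_C_mul_X_pow (p : R[X]) (c : R) (d : ℕ) (k : ℤ) :
    intCoeff (p * (1 + C c * X ^ d)) k = intCoeff p k + c * intCoeff p (k - d) := by
  rcases lt_or_ge k 0 with hk | hk
  · simp [intCoeff_of_neg _ hk, intCoeff_of_neg _ (show k - d < 0 by omega)]
  lift k to ℕ using hk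
  rw [intCoeff_natCast, intCoeff_natCast, mul_add, mul_one, coeff_add, ← mul_assoc, mul_comm p,
    mul_assoc, coeff_C_mul, coeff_mul_X_pow']
  split_ifs with hd
  · rw [← Nat.cast_sub hd, intCoeff_natCast]
  · rw [intCoeff_of_neg _ (by omega)]

lemma esymmOn_eq_zero_of_card_lt (A : Finset ι) (x : ι → R) {k : ℕ} (hk : #A < k) :
    esymmOn A x k = 0 := by
  rw [esymmOn, powersetCard_eq_empty.mpr hk, sum_empty]

lemma map_esymmOn (φ : R →+* S) (A : Finset ι) (x : ι → R) (k : ℕ) :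
    φ (esymmOn A x k) = esymmOn A (fun i => φ (x i)) k := by
  simp [esymmOn, map_sum, map_prod]

lemma prod_add_mul_eq_sum_esymmOn (A : Finset ι) (x : ι → R) (a y : R) :
    ∏ i ∈ A, (a + x i * y) = ∑ j ∈ range (#A + 1), esymmOn A x j * y ^ j * a ^ (#A - j) := by
  simp_rw [add_comm a, prod_add, prod_mul_distrib, prod_const, sum_powerset, esymmOn, sum_mul]
  refine sum_congr rfl fun j _ => sum_congr rfl fun t ht => ?_
  obtain ⟨htA, rfl⟩ := mem_powersetCard.mp ht
  rw [card_sdiff_of_subset htA]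

lemma coeff_one_add_C_mul_X_pow (c : R) (m k : ℕ) :
    ((1 + C c * X) ^ m).coeff k = c ^ k * m.choose k := by
  have hterm : ∀ i, (C c * X) ^ i * 1 ^ (m - i) * (m.choose i : R[X])
      = C (c ^ i * m.choose i) * X ^ i := by
    intro i
    rw [one_pow, mul_one, mul_pow, C_mul, C_pow, map_natCast]
    ring
  rw [add_comm, add_pow]
  simp_rw [hterm, finsetSum_coeff, coeff_C_mul_X_pow, sum_ite_eq, mem_range]
  split_ifs with hk
  · rfl
  · rw [Nat.choose_eq_zero_of_lt (by omega), Nat.cast_zero, mul_zero]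

noncomputable def esymmPoly {n : ℕ} (x : Fin n → R) : R[X] := ∏ i, (1 + C (x i) * X)

lemma esymmPoly_eq_sum {n : ℕ} (x : Fin n → R) :
    esymmPoly x = ∑ j ∈ range (n + 1), C (esymmOn univ x j) * X ^ j := by
  simp [esymmPoly, prod_add_mul_eq_sum_esymmOn, map_esymmOn]

lemma coeff_esymmPoly {n : ℕ} (x : Fin n → R) (k : ℕ) :
    (esymmPoly x).coeff k = esymmOn univ x k := by
  rw [esymmPoly_eq_sum]
  simp only [finsetSum_coeff, coeff_C_mul_X_pow, sum_ite_eq, mem_range]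
  split_ifs with hk
  · rfl
  · rw [esymmOn_eq_zero_of_card_lt _ _ (by simp; omega)]

lemma coeff_esymmPoly_zero {n : ℕ} (x : Fin n → R) : (esymmPoly x).coeff 0 = 1 := by
  simp [coeff_esymmPoly, esymmOn]

lemma natDegree_esymmPoly_le {n : ℕ} (x : Fin n → R) : (esymmPoly x).natDegree ≤ n := by
  refine natDegree_le_iff_coeff_eq_zero.mpr fun k hk => ?_
  rw [coeff_esymmPoly, esymmOn_eq_zero_of_card_lt _ _ (by simp; exact_mod_cast hk)]

lemma esymmPoly_map (φ : R →+* S) {n : ℕ} (x : Fin n → R) :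
    (esymmPoly x).map φ = esymmPoly (fun i => φ (x i)) := by
  simp [esymmPoly, Polynomial.map_prod]

lemma esymmPoly_snoc {n : ℕ} (x : Fin n → R) (y : R) :
    esymmPoly (Fin.snoc x y : Fin (n + 1) → R) = esymmPoly x * (1 + C y * X) := by
  simp [esymmPoly, Fin.prod_univ_castSucc]

lemma coeff_esymmPoly_add_const {n : ℕ} (x : Fin n → R) (c : R) (k : ℕ) :
    (esymmPoly fun i => x i + c).coeff k
      = ∑ j ∈ range (k + 1), ((n - j).choose (k - j) : R) * esymmOn univ x j * c ^ (k - j) := by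
  have hexp : esymmPoly (fun i => x i + c)
      = ∑ j ∈ range (n + 1), C (esymmOn univ x j) * X ^ j * (1 + C c * X) ^ (n - j) := by
    have hsum := prod_add_mul_eq_sum_esymmOn univ (fun i => C (x i)) (1 + C c * X) X
    simp only [card_univ, Fintype.card_fin, ← map_esymmOn] at hsum
    rw [esymmPoly, ← hsum]
    exact prod_congr rfl fun i _ => by rw [C_add]; ring
  simp_rw [hexp, mul_assoc, finsetSum_coeff, coeff_C_mul, coeff_X_pow_mul',
    coeff_one_add_C_mul_X_pow, mul_ite, mul_zero, ← sum_filter]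
  refine sum_subset (fun j => by simp) (fun j hj hj' => ?_) |>.trans
    (sum_congr rfl fun j _ => by ring)
  simp only [mem_filter, mem_range] at hj hj'
  rw [esymmOn_eq_zero_of_card_lt _ _ (by simp; omega), zero_mul]

lemma dbar_eq_intCoeff_esymmPoly [Algebra ℚ R] (r : ℕ) (s : R) (α : Fin r → R) (k : ℤ) :
    dbar r s α k = intCoeff (esymmPoly fun i => α i + ((1 : ℚ) / 2) • s) k := by
  rw [dbar]
  split_ifs with hk
  · lift k to ℕ using hk.1
    rw [intCoeff_natCast, coeff_esymmPoly_add_const, Int.toNat_natCast]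
  · rcases lt_or_ge k 0 with hneg | hpos
    · rw [intCoeff_of_neg _ hneg]
    · have := natDegree_esymmPoly_le fun i => α i + ((1 : ℚ) / 2) • s
      rw [intCoeff_of_natDegree_lt (by omega)]

def pairSumProd {n : ℕ} (x : Fin n → R) : R :=
  ∏ p ∈ univ.filter (fun p : Fin n × Fin n => p.1 < p.2), (x p.1 + x p.2)

lemma map_pairSumProd (φ : R →+* S) {n : ℕ} (x : Fin n → R) :
    φ (pairSumProd x) = pairSumProd (fun i => φ (x i)) := by
  simp [pairSumProd, map_prod]

lemma pairSumProd_snoc {n : ℕ} (x : Fin n → R) (y : R) :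
    pairSumProd (Fin.snoc x y : Fin (n + 1) → R) = pairSumProd x * ∏ i, (x i + y) := by
  simp [pairSumProd, prod_filter, Fintype.prod_prod_type, Fin.prod_univ_castSucc,
    Fin.castSucc_lt_last, prod_mul_distrib, not_lt_of_ge (Fin.le_last _)]

/-- With rows and columns numbered from `0`, entry `(i, j)` is `p_{2i+1-j}`: the paper's
`[d̄_{2i-j}]` numbered from `1`. -/
def stairMatrix (p : R[X]) (m : ℕ) : Matrix (Fin m) (Fin m) R :=
  Matrix.of fun i j => intCoeff p (2 * (i : ℤ) + 1 - j)

lemma stairMatrix_map (φ : R →+* S) (p : R[X]) (m : ℕ) :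
    (stairMatrix p m).map φ = stairMatrix (p.map φ) m := by
  ext i j
  simp [stairMatrix, intCoeff_map]

lemma det_stairMatrix_mul_one_add_C_mul_X_sq [IsDomain R] {Q : R[X]} {m : ℕ}
    (hQ : Q.natDegree < m) (c : R) : (stairMatrix (Q * (1 + C c * X ^ 2)) m).det = 0 := by
  obtain ⟨m, rfl⟩ : ∃ m', m = m' + 1 := ⟨m - 1, by omega⟩
  rw [← Matrix.exists_vecMul_eq_zero_iff]
  refine ⟨fun i => (-c) ^ (m - i), fun h => by simpa using congrFun h (Fin.last m), ?_⟩
  ext j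
  -- the rows weighted by powers of `-c` telescope
  set g : ℕ → R := fun i => (-c) ^ (m + 1 - i) * intCoeff Q (2 * i - 1 - j)
  have hterm : ∀ i ∈ range (m + 1), (-c) ^ (m - i) * intCoeff (Q * (1 + C c * X ^ 2))
      (2 * (i : ℤ) + 1 - j) = g (i + 1) - g i := by
    intro i hmem
    have hi : i ≤ m := Nat.lt_succ_iff.mp (mem_range.mp hmem)
    simp only [g, intCoeff_mul_one_add_C_mul_X_pow, show m + 1 - (i + 1) = m - i by omega,
      show m + 1 - i = m - i + 1 by omega]
    push_cast
    ring_nf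
  calc Matrix.vecMul (fun i : Fin (m + 1) => (-c) ^ (m - i)) (stairMatrix _ (m + 1)) j
      = ∑ i ∈ range (m + 1), (-c) ^ (m - i) * intCoeff (Q * (1 + C c * X ^ 2))
          (2 * (i : ℤ) + 1 - j) := by
        simp only [Matrix.vecMul, dotProduct, stairMatrix, Matrix.of_apply]
        exact Fin.sum_univ_eq_sum_range
          (fun i => (-c) ^ (m - i) * intCoeff (Q * (1 + C c * X ^ 2)) (2 * (i : ℤ) + 1 - j)) _
    _ = g (m + 1) - g 0 := by rw [sum_congr rfl hterm, sum_range_sub]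
    _ = 0 := by
        simp only [g]
        rw [intCoeff_of_natDegree_lt (by omega), intCoeff_of_neg _ (by omega)]
        simp

lemma map_det_stairMatrix_esymmPoly (φ : R →+* S) {n : ℕ} (x : Fin n → R) (m : ℕ) :
    φ (stairMatrix (esymmPoly x) m).det = (stairMatrix (esymmPoly fun i => φ (x i)) m).det := by
  rw [RingHom.map_det, RingHom.mapMatrix_apply, stairMatrix_map, esymmPoly_map]

lemma det_intCoeff_two_mul_sub {p : R[X]} (hp : p.coeff 0 = 1) (m : ℕ) :
    (Matrix.of fun i j : Fin m => intCoeff p (2 * (i : ℤ) - j)).det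
      = (stairMatrix p (m - 1)).det := by
  cases m with
  | zero => simp
  | succ m =>
    rw [Matrix.det_succ_row_zero, sum_eq_single 0]
    · have h00 : intCoeff p 0 = 1 := by exact_mod_cast (intCoeff_natCast p 0).trans hp
      simp only [Matrix.of_apply, Fin.val_zero, Nat.cast_zero, mul_zero, sub_zero, h00,
        Fin.succAbove_zero, pow_zero, one_mul]
      congr 1
      ext i j
      simp only [Matrix.submatrix_apply, Matrix.of_apply, stairMatrix, Fin.val_succ]
      push_cast
      ring_nf
    · intro j _ hj
      rw [Matrix.of_apply, intCoeff_of_neg _ (by simp [Fin.pos_iff_ne_zero.mpr hj]), mul_zero,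
        zero_mul]
    · simp

lemma stairMatrix_map_C_mul_one_add_C_X_mul_X (p : R[X]) (m : ℕ) :
    stairMatrix (p.map C * (1 + C X * X)) m
      = (X : R[X]) • (Matrix.of fun i j : Fin m => intCoeff p (2 * (i : ℤ) - j)).map C
        + (stairMatrix p m).map C := by
  ext i j
  rw [← pow_one (X : R[X][X])]
  simp only [stairMatrix, Matrix.of_apply, Matrix.add_apply, Matrix.smul_apply, Matrix.map_apply,
    intCoeff_mul_one_add_C_mul_X_pow, intCoeff_map, smul_eq_mul]
  ring_nf

lemma det_stairMatrix_esymmPoly_snoc_neg [IsDomain R] {m : ℕ} (y : Fin m → R) (l : Fin m) :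
    (stairMatrix (esymmPoly (Fin.snoc y (-y l) : Fin (m + 1) → R)) m).det = 0 := by
  cases m with
  | zero => exact l.elim0
  | succ m =>
    have hfactor : esymmPoly (Fin.snoc y (-y l) : Fin (m + 2) → R)
        = esymmPoly (fun i => y (l.succAbove i)) * (1 + C (-y l ^ 2) * X ^ 2) := by
      rw [esymmPoly_snoc, esymmPoly, Fin.prod_univ_succAbove _ l, esymmPoly, C_neg, C_neg, C_pow]
      ring
    rw [hfactor]
    exact det_stairMatrix_mul_one_add_C_mul_X_sq (Nat.lt_succ_of_le (natDegree_esymmPoly_le _)) _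

theorem det_stairMatrix_esymmPoly_snoc_X [IsDomain R] {m : ℕ} (x : Fin m → R)
    (hx : Function.Injective x) (ih : (stairMatrix (esymmPoly x) (m - 1)).det = pairSumProd x) :
    (stairMatrix (esymmPoly (Fin.snoc (fun i => C (x i)) X : Fin (m + 1) → R[X])) m).det
      = pairSumProd (Fin.snoc (fun i => C (x i)) X : Fin (m + 1) → R[X]) := by
  set t : Fin (m + 1) → R[X] := Fin.snoc (fun i => C (x i)) X
  set A := Matrix.of fun i j : Fin m => intCoeff (esymmPoly x) (2 * (i : ℤ) - j)
  have hD : (stairMatrix (esymmPoly t) m).det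
      = ((X : R[X]) • A.map C + (stairMatrix (esymmPoly x) m).map C).det := by
    rw [esymmPoly_snoc, ← esymmPoly_map, stairMatrix_map_C_mul_one_add_C_X_mul_X]
  have hP : pairSumProd t = C (pairSumProd x) * ∏ i, (X + C (x i)) := by
    simp [t, pairSumProd_snoc, map_pairSumProd, add_comm]
  have hmonic : (∏ i, (X + C (x i))).Monic := monic_prod_of_monic _ _ fun i _ => monic_X_add_C _
  have hdeg : (∏ i, (X + C (x i))).natDegree = m := by
    simp [natDegree_prod_of_monic _ _ fun i _ => monic_X_add_C _]
  have hDdeg : (stairMatrix (esymmPoly t) m).det.natDegree ≤ m := by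
    simpa [hD] using natDegree_det_X_add_C_le A (stairMatrix (esymmPoly x) m)
  have hPdeg : (pairSumProd t).natDegree ≤ m := hP ▸ (natDegree_C_mul_le _ _).trans hdeg.le
  have hA : A.det = pairSumProd x := by rw [det_intCoeff_two_mul_sub (coeff_esymmPoly_zero x), ih]
  have hDtop : (stairMatrix (esymmPoly t) m).det.coeff m = pairSumProd x := by
    simpa [hD, hA] using coeff_det_X_add_C_card A (stairMatrix (esymmPoly x) m)
  have hPtop : (pairSumProd t).coeff m = pairSumProd x := by
    have hlead := hmonic.coeff_natDegree
    rw [hdeg] at hlead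
    rw [hP, coeff_C_mul, hlead, mul_one]
  refine eq_of_degree_sub_lt_of_eval_index_eq (s := univ) (v := fun l => -x l)
    (fun a _ b _ h => hx (neg_injective h)) ?_ fun l _ => ?_
  · rw [card_univ, Fintype.card_fin, degree_lt_iff_coeff_zero]
    intro k hk
    rw [coeff_sub]
    rcases hk.eq_or_lt with rfl | hk
    · rw [hDtop, hPtop, sub_self]
    · rw [coeff_eq_zero_of_natDegree_lt (hDdeg.trans_lt hk),
        coeff_eq_zero_of_natDegree_lt (hPdeg.trans_lt hk), sub_self]
  · have hsnoc : (fun i => eval (-x l) (t i)) = Fin.snoc x (-x l) := by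
      funext i
      refine Fin.lastCases ?_ (fun i => ?_) i <;> simp [t]
    rw [← coe_evalRingHom, map_det_stairMatrix_esymmPoly, coe_evalRingHom, hsnoc,
      det_stairMatrix_esymmPoly_snoc_neg, hP, eval_mul, eval_prod,
      prod_eq_zero (mem_univ l) (by simp), mul_zero]

theorem det_stairMatrix_esymmPoly_X (n : ℕ) :
    (stairMatrix (esymmPoly (MvPolynomial.X : Fin n → MvPolynomial (Fin n) ℤ)) (n - 1)).det
      = pairSumProd (MvPolynomial.X : Fin n → MvPolynomial (Fin n) ℤ) := by
  induction n with
  | zero => simp [pairSumProd]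
  | succ m ih =>
    let ψ : (MvPolynomial (Fin m) ℤ)[X] →+* MvPolynomial (Fin (m + 1)) ℤ :=
      eval₂RingHom (MvPolynomial.rename Fin.castSucc).toRingHom (MvPolynomial.X (Fin.last m))
    have hψ : (fun i => ψ ((Fin.snoc (fun i => C (MvPolynomial.X i)) X :
        Fin (m + 1) → (MvPolynomial (Fin m) ℤ)[X]) i)) = MvPolynomial.X := by
      funext i
      refine Fin.lastCases ?_ (fun i => ?_) i <;> simp [ψ]
    have h := congrArg ψ (det_stairMatrix_esymmPoly_snoc_X _ (MvPolynomial.X_injective) ih)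
    rwa [map_det_stairMatrix_esymmPoly, map_pairSumProd, hψ] at h

theorem det_stairMatrix_esymmPoly {n : ℕ} (x : Fin n → R) :
    (stairMatrix (esymmPoly x) (n - 1)).det = pairSumProd x := by
  have h := congrArg (MvPolynomial.eval₂Hom (Int.castRingHom R) x) (det_stairMatrix_esymmPoly_X n)
  simpa [map_det_stairMatrix_esymmPoly, map_pairSumProd] using h

end

theorem prod_pairs_eq_det_dbar {R : Type*} [CommRing R] [Algebra ℚ R] (r : ℕ)
    (s : R) (α : Fin r → R) :
    (∏ p ∈ Finset.univ.filter (fun p : Fin r × Fin r => p.1 < p.2), (s + α p.1 + α p.2))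
      = (Matrix.of fun i j : Fin (r - 1) =>
          dbar r s α (2 * ((i : ℤ) + 1) - ((j : ℤ) + 1))).det := by
  have hhalf : ((1 : ℚ) / 2) • s + ((1 : ℚ) / 2) • s = s := by rw [← add_smul]; norm_num
  have hmatrix : (Matrix.of fun i j : Fin (r - 1) => dbar r s α (2 * ((i : ℤ) + 1) - ((j : ℤ) + 1)))
      = stairMatrix (esymmPoly fun i => α i + ((1 : ℚ) / 2) • s) (r - 1) := by
    ext i j
    rw [Matrix.of_apply, dbar_eq_intCoeff_esymmPoly, stairMatrix, Matrix.of_apply]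
    ring_nf
  rw [hmatrix, det_stairMatrix_esymmPoly, pairSumProd]
  exact prod_congr rfl fun p _ => by linear_combination hhalf.symm
end
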